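/- Let x : Fin N⁺ → ℝⁿ be a family of positive instances and x' : Fin N⁻ → ℝⁿ a family of negative instances, let ⟪·,·⟫ and ‖·‖ denote the standard inner product and norm on ℝⁿ, let [z]₊ = max(z, 0), and let C ≥ 0. Then for every θ ∈ ℝ and every w ∈ ℝⁿ: (1/2)‖w‖² + C · Σ_{i} Σ_{j} [1 - ⟪w, x i - x' j⟫]₊ ≤ (1/4) · ( (1/2)‖2w‖² + 2·N⁻·C · Σ_{i} [1 - ⟪2w, x i⟫ + 2θ]₊ + 2·N⁺·C · Σ_{j} [1 + ⟪2w, x' j⟫ - 2θ]₊ ). -/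

import Mathlib

/-!
Put `a i = 1 - ⟪2w, x i⟫ + 2θ` and `b j = 1 + ⟪2w, x' j⟫ - 2θ`. The threshold cancels in
`a i + b j`, so the RankSVM margin of the pair `(i, j)` is `1 - ⟪w, x i - x' j⟫ = (a i + b j) / 2`,
and subadditivity of the hinge gives `[(a i + b j) / 2]₊ ≤ ([a i]₊ + [b j]₊) / 2`. Summing over all
pairs counts each `[a i]₊` exactly `N⁻` times and each `[b j]₊` exactly `N⁺` times, which produces
the weights `C₊ = 2N⁻C` and `C₋ = 2N⁺C`; the regularisers match because `‖2w‖² = 4‖w‖²`.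
-/

open scoped RealInnerProductSpace

lemma max_add_div_two_zero_le (a b : ℝ) : max ((a + b) / 2) 0 ≤ (max a 0 + max b 0) / 2 :=
  max_le (by linarith [le_max_left a 0, le_max_left b 0]) (by positivity)

theorem Fintype.sum_sum_add {ι κ M : Type*} [Fintype ι] [Fintype κ] [AddCommMonoid M]
    (f : ι → M) (g : κ → M) :
    ∑ i, ∑ j, (f i + g j) = Fintype.card κ • ∑ i, f i + Fintype.card ι • ∑ j, g j := by
  simp only [Finset.sum_add_distrib, Finset.sum_const, Finset.card_univ, Finset.smul_sum]

section Pairs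

variable {E : Type*} [NormedAddCommGroup E] [InnerProductSpace ℝ E]

lemma one_sub_inner_sub_eq (w p q : E) (θ : ℝ) :
    1 - ⟪w, p - q⟫ = ((1 - ⟪(2 : ℝ) • w, p⟫ + 2 * θ) + (1 + ⟪(2 : ℝ) • w, q⟫ - 2 * θ)) / 2 := by
  rw [inner_sub_right, real_inner_smul_left, real_inner_smul_left]
  ring

lemma max_one_sub_inner_sub_zero_le (w p q : E) (θ : ℝ) :
    max (1 - ⟪w, p - q⟫) 0 ≤
      (max (1 - ⟪(2 : ℝ) • w, p⟫ + 2 * θ) 0 + max (1 + ⟪(2 : ℝ) • w, q⟫ - 2 * θ) 0) / 2 := by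
  rw [one_sub_inner_sub_eq w p q θ]
  exact max_add_div_two_zero_le _ _

lemma sum_sum_max_one_sub_inner_sub_zero_le {ι κ : Type*} [Fintype ι] [Fintype κ]
    (x : ι → E) (x' : κ → E) (w : E) (θ : ℝ) :
    ∑ i, ∑ j, max (1 - ⟪w, x i - x' j⟫) 0 ≤
      (Fintype.card κ * ∑ i, max (1 - ⟪(2 : ℝ) • w, x i⟫ + 2 * θ) 0 +
        Fintype.card ι * ∑ j, max (1 + ⟪(2 : ℝ) • w, x' j⟫ - 2 * θ) 0) / 2 := by
  calc ∑ i, ∑ j, max (1 - ⟪w, x i - x' j⟫) 0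
      ≤ ∑ i, ∑ j, (max (1 - ⟪(2 : ℝ) • w, x i⟫ + 2 * θ) 0 / 2 +
          max (1 + ⟪(2 : ℝ) • w, x' j⟫ - 2 * θ) 0 / 2) :=
        Finset.sum_le_sum fun i _ => Finset.sum_le_sum fun j _ =>
          (max_one_sub_inner_sub_zero_le w (x i) (x' j) θ).trans_eq (add_div _ _ _)
    _ = _ := by
        rw [Fintype.sum_sum_add, nsmul_eq_mul, nsmul_eq_mul, ← Finset.sum_div, ← Finset.sum_div]
        ring

end Pairs

/-- Theorem 2 of the paper: the RankSVM objective with pair weights `C/2` is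
upper-bounded by `1/4` times the standard (thresholded) SVM objective with
`C₊ = 2N⁻·C`, `C₋ = 2N⁺·C`, evaluated at the scaled pair `(2θ, 2w)`. -/
theorem ranksvm_obj_le_quarter_standard_svm_obj {n Np Nm : ℕ}
    (x : Fin Np → EuclideanSpace ℝ (Fin n)) (x' : Fin Nm → EuclideanSpace ℝ (Fin n))
    (C : ℝ) (hC : 0 ≤ C) (θ : ℝ) (w : EuclideanSpace ℝ (Fin n)) :
    (1 / 2) * ‖w‖ ^ 2 +
        C * ∑ i, ∑ j, max (1 - ⟪w, x i - x' j⟫) 0 ≤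
      (1 / 4) *
        ((1 / 2) * ‖(2 : ℝ) • w‖ ^ 2 +
          2 * (Nm : ℝ) * C * ∑ i, max (1 - ⟪(2 : ℝ) • w, x i⟫ + 2 * θ) 0 +
          2 * (Np : ℝ) * C * ∑ j, max (1 + ⟪(2 : ℝ) • w, x' j⟫ - 2 * θ) 0) := by
  have hnorm : ‖(2 : ℝ) • w‖ ^ 2 = 4 * ‖w‖ ^ 2 := by
    rw [norm_smul, mul_pow, Real.norm_two]
    norm_num
  have hpairs := mul_le_mul_of_nonneg_left (sum_sum_max_one_sub_inner_sub_zero_le x x' w θ) hC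
  simp only [Fintype.card_fin] at hpairs
  rw [hnorm]
  linarith
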